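/- With h as above (g₁, f₁ : I → [0,∞) continuous, g₁ ≤ f₁, r ≥ 0), the function h is continuous at every point (y₁, y₂, y₃, y₄) ∈ [0,∞] × I × [0,∞] × I with either y₁ ≠ y₃, or y₁ = y₃ < ∞ and g₁(y₂) = f₁(y₄) with y₂ = y₄, or y₁ = y₃ = ∞ and r > 0. -/
import Mathlib


open Filter Topology Set
open scoped ENNReal

/-- Discounting `e^{-r y}` on `[0,∞]`, with the conventions `e^{-r·∞} := 0` for
`r > 0` and `e^{-0·∞} := 1`. -/
noncomputable def discount' (r : ℝ) (y : ℝ≥0∞) : ℝ :=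
  if y = ∞ then (if r = 0 then 1 else 0) else Real.exp (-(r * y.toReal))

private lemma tendsto_ite' {α β} {l : Filter α} {l' : Filter β} {F G : α → β}
    {c : α → Prop} [DecidablePred c]
    (hF : Tendsto F l l') (hG : Tendsto G l l') :
    Tendsto (fun x => if c x then F x else G x) l l' := by
  intro s hs
  have h1 := hF hs; have h2 := hG hs
  rw [mem_map] at h1 h2 ⊢
  filter_upwards [h1, h2] with x hx1 hx2
  by_cases h : c x <;> simp only [Set.mem_preimage, h, if_true, if_false] <;> [exact hx1; exact hx2]

private lemma toReal_tendsto_atTop :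
    Tendsto ENNReal.toReal (𝓝[≠] (∞ : ℝ≥0∞)) atTop := by
  rw [tendsto_atTop]
  intro M
  have h1 : Ioi (ENNReal.ofReal (max M 0)) ∈ 𝓝 (∞ : ℝ≥0∞) :=
    Ioi_mem_nhds (ENNReal.ofReal_lt_top)
  filter_upwards [nhdsWithin_le_nhds h1, self_mem_nhdsWithin] with y hy hy'
  have hy' : y ≠ ∞ := hy'
  have := (ENNReal.ofReal_lt_iff_lt_toReal (le_max_right M 0) hy').mp hy
  exact le_trans (le_max_left M 0) this.le

private lemma continuous_discount' {r : ℝ} (hr : 0 ≤ r) : Continuous (discount' r) := by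
  rw [continuous_iff_continuousAt]
  intro x
  rcases eq_or_ne x ∞ with hx | hx
  · subst hx
    rcases eq_or_lt_of_le hr with hr0 | hr0
    · -- r = 0 : function is constant 1
      have : discount' r = fun _ => 1 := by
        funext y
        simp only [discount']
        split
        · simp [← hr0]
        · simp [← hr0]
      rw [this]; exact continuousAt_const
    · -- r > 0
      have hval : discount' r ∞ = 0 := by simp [discount', hr0.ne']
      rw [ContinuousAt, hval, ← nhdsNE_sup_pure, tendsto_sup]
      constructor
      · have h2 : Tendsto (fun y : ℝ≥0∞ => Real.exp (-(r * y.toReal)))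
            (𝓝[≠] (∞ : ℝ≥0∞)) (𝓝 0) := by
          apply Real.tendsto_exp_atBot.comp
          apply tendsto_neg_atBot_iff.mpr
          exact (tendsto_const_mul_atTop_of_pos hr0).mpr toReal_tendsto_atTop
        refine h2.congr' ?_
        filter_upwards [self_mem_nhdsWithin] with y hy
        have hy' : y ≠ ∞ := hy
        simp [discount', hy']
      · rw [tendsto_pure_left]
        intro s hs
        rw [hval]; exact mem_of_mem_nhds hs
  · have h2 : ContinuousAt (fun y : ℝ≥0∞ => Real.exp (-(r * y.toReal))) x := by
      exact (Real.continuous_exp.continuousAt).comp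
        (((ENNReal.tendsto_toReal hx).const_mul r).neg)
    refine h2.congr ?_
    have hmem : {y : ℝ≥0∞ | y ≠ ∞} ∈ 𝓝 x := ENNReal.isOpen_ne_top.mem_nhds hx
    filter_upwards [hmem] with y hy
    simp [discount', hy]

/-- The Dynkin-game payoff `h(y₁,y₂,y₃,y₄) = 1_{y₁ ≤ y₃} e^{-r y₁} g₁(y₂) +
1_{y₁ > y₃} e^{-r y₃} f₁(y₄)` is continuous at every point with `y₁ ≠ y₃`, at every
point with `y₁ = y₃ < ∞`, `y₂ = y₄` and `g₁(y₂) = f₁(y₄)`, and at every point with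
`y₁ = y₃ = ∞` provided `r > 0`. -/
theorem stmt19 {a b : ℝ}
    (g₁ f₁ : Set.Icc a b → ℝ) (hg : Continuous g₁) (hf : Continuous f₁)
    (hg0 : ∀ y, 0 ≤ g₁ y) (hf0 : ∀ y, 0 ≤ f₁ y) (hle : ∀ y, g₁ y ≤ f₁ y)
    (r : ℝ) (hr : 0 ≤ r)
    (p : ℝ≥0∞ × Set.Icc a b × ℝ≥0∞ × Set.Icc a b)
    (hp : p.1 ≠ p.2.2.1 ∨
      (p.1 = p.2.2.1 ∧ p.1 ≠ ∞ ∧ p.2.1 = p.2.2.2 ∧ g₁ p.2.1 = f₁ p.2.2.2) ∨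
      (p.1 = ∞ ∧ p.2.2.1 = ∞ ∧ 0 < r)) :
    ContinuousAt
      (fun q : ℝ≥0∞ × Set.Icc a b × ℝ≥0∞ × Set.Icc a b =>
        if q.1 ≤ q.2.2.1 then discount' r q.1 * g₁ q.2.1
        else discount' r q.2.2.1 * f₁ q.2.2.2) p := by
  have hD := continuous_discount' hr
  have hF : Continuous (fun q : ℝ≥0∞ × Set.Icc a b × ℝ≥0∞ × Set.Icc a b =>
      discount' r q.1 * g₁ q.2.1) :=
    (hD.comp continuous_fst).mul (hg.comp (continuous_fst.comp continuous_snd))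
  have hG : Continuous (fun q : ℝ≥0∞ × Set.Icc a b × ℝ≥0∞ × Set.Icc a b =>
      discount' r q.2.2.1 * f₁ q.2.2.2) :=
    (hD.comp (continuous_fst.comp (continuous_snd.comp continuous_snd))).mul
      (hf.comp (continuous_snd.comp (continuous_snd.comp continuous_snd)))
  rcases hp with hne | heq
  · -- y₁ ≠ y₃ : locally equal to one branch
    rcases lt_or_gt_of_ne hne with hlt | hgt
    · have hmem : {q : ℝ≥0∞ × Set.Icc a b × ℝ≥0∞ × Set.Icc a b | q.1 < q.2.2.1} ∈ 𝓝 p := by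
        refine (isOpen_lt continuous_fst
          (continuous_fst.comp (continuous_snd.comp continuous_snd))).mem_nhds hlt
      refine hF.continuousAt.congr ?_
      filter_upwards [hmem] with q hq
      simp [le_of_lt hq]
    · have hmem : {q : ℝ≥0∞ × Set.Icc a b × ℝ≥0∞ × Set.Icc a b | q.2.2.1 < q.1} ∈ 𝓝 p := by
        refine (isOpen_lt (continuous_fst.comp (continuous_snd.comp continuous_snd))
          continuous_fst).mem_nhds hgt
      refine hG.continuousAt.congr ?_
      filter_upwards [hmem] with q hq
      simp [not_le_of_gt hq]
  · -- both branches agree at p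
    have hvals : discount' r p.1 * g₁ p.2.1 = discount' r p.2.2.1 * f₁ p.2.2.2 := by
      rcases heq with ⟨h13, _, h24, hgf⟩ | ⟨h1, h3, hr0⟩
      · rw [h13, hgf]
      · rw [h1, h3]
        simp [discount', hr0.ne']
    have h13 : p.1 ≤ p.2.2.1 := by
      rcases heq with ⟨h13, _⟩ | ⟨h1, h3, _⟩
      · exact h13.le
      · rw [h1, h3]
    have hval : (if p.1 ≤ p.2.2.1 then discount' r p.1 * g₁ p.2.1
        else discount' r p.2.2.1 * f₁ p.2.2.2) = discount' r p.1 * g₁ p.2.1 := by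
      simp [h13]
    rw [ContinuousAt, hval]
    have hGp : Tendsto (fun q : ℝ≥0∞ × Set.Icc a b × ℝ≥0∞ × Set.Icc a b =>
        discount' r q.2.2.1 * f₁ q.2.2.2) (𝓝 p) (𝓝 (discount' r p.1 * g₁ p.2.1)) := by
      rw [hvals]; exact hG.continuousAt
    exact tendsto_ite' (hF.continuousAt) hGp
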